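/- If m > n (more bottom than top parameters, all with nonnegative p-adic valuation), then the hypergeometric series H(α;β;x) does not have good reduction modulo p: there exists a coefficient h_k with val_p(h_k) < 0. -/

import Mathlib

open Finset

section Core

variable {p : ℕ} [hp : Fact p.Prime]

/-- Splitting a sum over `range (a*b)` into blocks. -/
lemma sum_range_mul_eq {M : Type*} [AddCommMonoid M] (f : ℕ → M) (a b : ℕ) :
    ∑ k ∈ range (a * b), f k = ∑ t ∈ range b, ∑ r ∈ range a, f (a * t + r) := by
  induction b with
  | zero => simp
  | succ b ih =>
    rw [Nat.mul_succ, Finset.sum_range_add, ih, Finset.sum_range_succ]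

/-- Core recursion: exact value of `∑_{k<p^N} v_p(c + k d)` up to a bounded error. -/
lemma core_sum_val (d : ℤ) (hd : ¬ (p : ℤ) ∣ d) :
    ∀ (N : ℕ) (c : ℤ), (∀ k : ℕ, c + (k : ℤ) * d ≠ 0) →
    ∃ e : ℤ, e ≠ 0 ∧ e.natAbs ≤ max c.natAbs d.natAbs ∧
      ∑ k ∈ range (p ^ N), (padicValInt p (c + (k : ℤ) * d) : ℤ)
        = (∑ j ∈ range N, (p : ℤ) ^ j) + padicValInt p e := by
  intro N
  induction N with
  | zero =>
    intro c hc
    refine ⟨c, by simpa using hc 0, le_max_left _ _, by simp⟩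
  | succ N ih =>
    intro c hc
    haveI : NeZero p := ⟨hp.out.ne_zero⟩
    have hdz : ((d : ZMod p)) ≠ 0 := by
      simpa [ZMod.intCast_zmod_eq_zero_iff_dvd] using hd
    set x : ZMod p := (-(c : ZMod p)) * (d : ZMod p)⁻¹ with hx
    set r0 : ℕ := x.val with hr0def
    have hr0lt : r0 < p := ZMod.val_lt _
    have hxcast : ((r0 : ℕ) : ZMod p) = x := by
      rw [hr0def, ZMod.natCast_val, ZMod.cast_id]
    have hdvd : (p : ℤ) ∣ c + (r0 : ℤ) * d := by
      rw [← ZMod.intCast_zmod_eq_zero_iff_dvd]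
      push_cast
      rw [hxcast, hx, mul_assoc, inv_mul_cancel₀ hdz, mul_one]
      ring
    -- uniqueness of the residue
    have huniq : ∀ r : ℕ, r < p → (p : ℤ) ∣ c + (r : ℤ) * d → r = r0 := by
      intro r hr hdr
      rw [← ZMod.intCast_zmod_eq_zero_iff_dvd] at hdr
      push_cast at hdr
      have : ((r : ℕ) : ZMod p) = x := by
        rw [hx]
        field_simp
        linear_combination hdr
      have := congrArg ZMod.val this
      rwa [ZMod.val_cast_of_lt hr, ← hr0def] at this
    obtain ⟨c', hc'⟩ := hdvd
    have hc'ne : ∀ k : ℕ, c' + (k : ℤ) * d ≠ 0 := by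
      intro k hk
      apply hc (r0 + p * k)
      have : c + ((r0 + p * k : ℕ) : ℤ) * d = (p : ℤ) * (c' + (k : ℤ) * d) := by
        push_cast
        rw [mul_add, ← hc']
        ring
      rw [this, hk, mul_zero]
    obtain ⟨e, he0, hebd, hesum⟩ := ih c' hc'ne
    refine ⟨e, he0, ?_, ?_⟩
    · refine hebd.trans (max_le ?_ (le_max_right _ _))
      -- |c'| ≤ max |c| |d|
      have h1 : p * c'.natAbs = (c + (r0:ℤ) * d).natAbs := by
        rw [hc', Int.natAbs_mul, Int.natAbs_natCast]
      have h2 : (c + (r0:ℤ)*d).natAbs ≤ c.natAbs + r0 * d.natAbs := by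
        calc (c + (r0:ℤ)*d).natAbs ≤ c.natAbs + ((r0:ℤ)*d).natAbs := Int.natAbs_add_le _ _
        _ = c.natAbs + r0 * d.natAbs := by rw [Int.natAbs_mul, Int.natAbs_natCast]
      have h3 : c.natAbs + r0 * d.natAbs ≤ p * max c.natAbs d.natAbs := by
        have : r0 ≤ p - 1 := Nat.le_sub_one_of_lt hr0lt
        have hp1 : 1 ≤ p := hp.out.one_lt.le
        calc c.natAbs + r0 * d.natAbs
            ≤ max c.natAbs d.natAbs + (p-1) * max c.natAbs d.natAbs := by
              gcongr <;> [exact le_max_left _ _; exact le_max_right _ _]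
        _ = (1 + (p-1)) * max c.natAbs d.natAbs := by ring
        _ = p * max c.natAbs d.natAbs := by rw [Nat.add_sub_cancel' hp1]
      exact Nat.le_of_mul_le_mul_left (by rw [h1]; exact h2.trans h3) hp.out.pos
    · -- the sum computation
      have hsplit : ∑ k ∈ range (p ^ (N+1)), (padicValInt p (c + (k : ℤ) * d) : ℤ)
          = ∑ t ∈ range (p ^ N), ∑ r ∈ range p,
              (padicValInt p (c + ((p * t + r : ℕ) : ℤ) * d) : ℤ) := by
        rw [pow_succ, mul_comm (p ^ N) p, sum_range_mul_eq]
      have hinner : ∀ t ∈ range (p ^ N), ∑ r ∈ range p,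
          (padicValInt p (c + ((p * t + r : ℕ) : ℤ) * d) : ℤ)
          = 1 + (padicValInt p (c' + (t : ℤ) * d) : ℤ) := by
        intro t _
        rw [Finset.sum_eq_single_of_mem r0 (mem_range.2 hr0lt)]
        · have heq : c + ((p * t + r0 : ℕ) : ℤ) * d = (p : ℤ) * (c' + (t:ℤ) * d) := by
            push_cast
            rw [mul_add, ← hc']
            ring
          rw [heq, padicValInt.mul (by exact_mod_cast hp.out.ne_zero) (hc'ne t),
            padicValInt.of_nat, padicValNat.self hp.out.one_lt]
          push_cast; ring
        · intro r hr hne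
          rw [mem_range] at hr
          have : ¬ (p : ℤ) ∣ c + ((p * t + r : ℕ) : ℤ) * d := by
            intro hdvd2
            apply hne
            apply huniq r hr
            have : (p : ℤ) ∣ ((p : ℤ) * t * d) := ⟨(t : ℤ) * d, by ring⟩
            have h4 : c + ((p * t + r : ℕ):ℤ) * d = (c + (r:ℤ)*d) + (p:ℤ)*t*d := by
              push_cast; ring
            rw [h4] at hdvd2
            exact (dvd_add_right this).mp (by rwa [add_comm] at hdvd2)
          rw [padicValInt.eq_zero_of_not_dvd this, Nat.cast_zero]
      rw [hsplit, Finset.sum_congr rfl hinner, Finset.sum_add_distrib, hesum,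
        Finset.sum_const, Finset.card_range, Finset.sum_range_succ]
      ring

/-- padicValRat of a finite product of nonzero rationals. -/
lemma padicValRat_prod {ι : Type*} (s : Finset ι) (f : ι → ℚ) (hf : ∀ i ∈ s, f i ≠ 0) :
    padicValRat p (∏ i ∈ s, f i) = ∑ i ∈ s, padicValRat p (f i) := by
  classical
  induction s using Finset.cons_induction with
  | empty => simp
  | cons a s ha ih =>
    rw [Finset.prod_cons, Finset.sum_cons,
      padicValRat.mul (hf a (Finset.mem_cons_self _ _))
        (Finset.prod_ne_zero_iff.2 fun i hi => hf i (Finset.mem_cons_of_mem hi)),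
      ih fun i hi => hf i (Finset.mem_cons_of_mem hi)]

lemma asc_eval_ne_zero (a : ℚ) (ha : ∀ k : ℕ, a + (k:ℚ) ≠ 0) (K : ℕ) :
    (ascPochhammer ℚ K).eval a ≠ 0 := by
  induction K with
  | zero => simp
  | succ K ih => rw [ascPochhammer_succ_eval]; exact mul_ne_zero ih (ha K)

lemma val_asc_eval (a : ℚ) (ha : ∀ k : ℕ, a + (k:ℚ) ≠ 0) (K : ℕ) :
    padicValRat p ((ascPochhammer ℚ K).eval a)
      = ∑ k ∈ range K, padicValRat p (a + (k:ℚ)) := by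
  induction K with
  | zero => simp
  | succ K ih =>
    rw [ascPochhammer_succ_eval, padicValRat.mul (asc_eval_ne_zero a ha K) (ha K), ih,
      sum_range_succ]

lemma val_asc_key (a : ℚ) (hv : 0 ≤ padicValRat p a) (haz : ∀ l : ℕ, a ≠ -(l:ℚ)) (N : ℕ) :
    ∃ ε : ℤ, 0 ≤ ε ∧ ε ≤ (max a.num.natAbs a.den : ℕ) ∧
      padicValRat p ((ascPochhammer ℚ (p ^ N)).eval a)
        = (∑ j ∈ range N, (p : ℤ) ^ j) + ε := by
  have ha0 : a ≠ 0 := by simpa using haz 0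
  have ha : ∀ k : ℕ, a + (k:ℚ) ≠ 0 := by
    intro k hk
    exact haz k (by linarith)
  -- p does not divide the denominator
  have hden : ¬ p ∣ a.den := by
    intro hpd
    have hnum : ¬ p ∣ a.num.natAbs := by
      intro hpn
      exact hp.out.not_dvd_one (a.reduced ▸ Nat.dvd_gcd hpn hpd)
    have h1 : padicValInt p a.num = 0 := padicValNat.eq_zero_of_not_dvd hnum
    have h2 : 1 ≤ padicValNat p a.den := one_le_padicValNat_of_dvd a.den_nz hpd
    rw [padicValRat_def, h1] at hv
    omega
  have hdenZ : ¬ (p : ℤ) ∣ (a.den : ℤ) := by exact_mod_cast hden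
  -- identity a + k = (num + k*den)/den
  have hiden : ∀ k : ℕ, (a + (k:ℚ)) * (a.den : ℚ) = ((a.num + (k:ℤ) * a.den : ℤ) : ℚ) := by
    intro k
    have hd : (a.den : ℚ) ≠ 0 := by exact_mod_cast a.den_nz
    have h2 : a * (a.den : ℚ) = (a.num : ℚ) := by
      nth_rewrite 1 [← Rat.num_div_den a]
      exact div_mul_cancel₀ _ hd
    push_cast
    rw [add_mul, h2]
  have hden0 : ((a.den : ℤ) : ℚ) ≠ 0 := by exact_mod_cast a.den_nz
  have hcd : ∀ k : ℕ, a.num + (k:ℤ) * (a.den : ℤ) ≠ 0 := by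
    intro k hk
    apply ha k
    have := hiden k
    rw [hk] at this
    push_cast at this
    rcases mul_eq_zero.1 this with h | h
    · exact h
    · exact absurd h (by exact_mod_cast a.den_nz)
  have hvalak : ∀ k : ℕ, padicValRat p (a + (k:ℚ))
      = (padicValInt p (a.num + (k:ℤ) * a.den) : ℤ) := by
    intro k
    have h1 : a + (k:ℚ) = ((a.num + (k:ℤ) * a.den : ℤ) : ℚ) / ((a.den : ℤ) : ℚ) := by
      rw [eq_div_iff (by exact_mod_cast a.den_nz)]
      exact_mod_cast hiden k
    have hnum0 : ((a.num + (k:ℤ) * a.den : ℤ) : ℚ) ≠ 0 := by exact_mod_cast hcd k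
    rw [h1, padicValRat.div hnum0 hden0, padicValRat.of_int, padicValRat.of_int,
      show padicValInt p (a.den : ℤ) = 0 from padicValNat.eq_zero_of_not_dvd (by simpa using hden),
      Nat.cast_zero, sub_zero]
  obtain ⟨e, he0, hebd, hesum⟩ := core_sum_val (a.den : ℤ) hdenZ N a.num hcd
  refine ⟨(padicValInt p e : ℤ), by positivity, ?_, ?_⟩
  · -- padicValInt p e ≤ max
    have h1 : p ^ padicValInt p e ≤ e.natAbs := by
      apply Nat.le_of_dvd (Int.natAbs_pos.2 he0)
      exact pow_padicValNat_dvd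
    have h2 : padicValInt p e < 2 ^ padicValInt p e := Nat.lt_two_pow_self
    have h3 : 2 ^ padicValInt p e ≤ p ^ padicValInt p e :=
      Nat.pow_le_pow_left hp.out.two_le _
    have : padicValInt p e ≤ max a.num.natAbs a.den := by
      have := hebd
      simp only [Int.natAbs_natCast] at this
      omega
    exact_mod_cast this
  · rw [val_asc_eval a ha, Finset.sum_congr rfl fun k _ => hvalak k, ← hesum]

end Core

theorem no_good_reduction_of_more_bottom_parameters
    (p : ℕ) (hp : p.Prime) (n m : ℕ) (hmn : n < m)
    (α : Fin n → ℚ) (β : Fin m → ℚ)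
    (hα : ∀ i, 0 ≤ padicValRat p (α i)) (hβ : ∀ j, 0 ≤ padicValRat p (β j))
    (hαZ : ∀ i (l : ℕ), α i ≠ -(l : ℚ)) (hβZ : ∀ j (l : ℕ), β j ≠ -(l : ℚ))
    (h : ℕ → ℚ)
    (hh : ∀ k, h k = (∏ i, (ascPochhammer ℚ k).eval (α i)) /
      (∏ j, (ascPochhammer ℚ k).eval (β j))) :
    ∃ k : ℕ, padicValRat p (h k) < 0 := by
  haveI : Fact p.Prime := ⟨hp⟩
  classical
  set C : ℕ := ∑ i, max (α i).num.natAbs (α i).den with hC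
  set N : ℕ := C + 1 with hN
  refine ⟨p ^ N, ?_⟩
  set G : ℤ := ∑ j ∈ Finset.range N, (p : ℤ) ^ j with hG
  have hGN : (N : ℤ) ≤ G := by
    rw [hG]
    calc (N : ℤ) = ∑ _j ∈ Finset.range N, (1 : ℤ) := by simp
    _ ≤ _ := Finset.sum_le_sum fun j _ =>
        by exact_mod_cast Nat.one_le_pow j p hp.pos
  have hαa : ∀ i, ∀ k : ℕ, α i + (k : ℚ) ≠ 0 := fun i k hk => hαZ i k (by linarith)
  have hβa : ∀ j, ∀ k : ℕ, β j + (k : ℚ) ≠ 0 := fun j k hk => hβZ j k (by linarith)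
  have hPne : ∀ i, (ascPochhammer ℚ (p ^ N)).eval (α i) ≠ 0 :=
    fun i => asc_eval_ne_zero _ (hαa i) _
  have hQne : ∀ j, (ascPochhammer ℚ (p ^ N)).eval (β j) ≠ 0 :=
    fun j => asc_eval_ne_zero _ (hβa j) _
  choose εa hεa0 hεabd hεasum using fun i => val_asc_key (α i) (hα i) (hαZ i) N
  choose εb hεb0 hεbbd hεbsum using fun j => val_asc_key (β j) (hβ j) (hβZ j) N
  rw [hh, padicValRat.div (Finset.prod_ne_zero_iff.2 fun i _ => hPne i)
      (Finset.prod_ne_zero_iff.2 fun j _ => hQne j),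
    padicValRat_prod _ _ (fun i _ => hPne i), padicValRat_prod _ _ (fun j _ => hQne j)]
  have hnum : ∑ i, padicValRat p ((ascPochhammer ℚ (p ^ N)).eval (α i))
      ≤ (n : ℤ) * G + (C : ℤ) := by
    calc ∑ i, padicValRat p ((ascPochhammer ℚ (p ^ N)).eval (α i))
        = ∑ i, (G + εa i) := Finset.sum_congr rfl fun i _ => hεasum i
    _ = (n : ℤ) * G + ∑ i, εa i := by
        rw [Finset.sum_add_distrib, Finset.sum_const, Finset.card_univ, Fintype.card_fin,
          nsmul_eq_mul]
    _ ≤ (n : ℤ) * G + (C : ℤ) := by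
        have : ∑ i, εa i ≤ (C : ℤ) := by
          have : (C : ℤ) = ∑ i, ((max (α i).num.natAbs (α i).den : ℕ) : ℤ) := by
            rw [hC]; push_cast; rfl
          rw [this]
          exact Finset.sum_le_sum fun i _ => hεabd i
        linarith
  have hden : (m : ℤ) * G ≤ ∑ j, padicValRat p ((ascPochhammer ℚ (p ^ N)).eval (β j)) := by
    calc (m : ℤ) * G = ∑ _j : Fin m, G := by
          rw [Finset.sum_const, Finset.card_univ, Fintype.card_fin, nsmul_eq_mul]
    _ ≤ ∑ j, (G + εb j) := Finset.sum_le_sum fun j _ => le_add_of_nonneg_right (hεb0 j)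
    _ = _ := (Finset.sum_congr rfl fun j _ => (hεbsum j).symm)
  have hm : (n : ℤ) + 1 ≤ (m : ℤ) := by exact_mod_cast hmn
  have hGpos : (0 : ℤ) ≤ G := le_trans (by positivity) hGN
  have hmul : ((n : ℤ) + 1) * G ≤ (m : ℤ) * G := mul_le_mul_of_nonneg_right hm hGpos
  have hNC : (N : ℤ) = (C : ℤ) + 1 := by rw [hN]; push_cast; ring
  linarith
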